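/- arXiv:2405.15070 — 2 statements merged into one kernel-verified Lean document; each statement's English description precedes it below -/
import Mathlib

section
/- The approximation bound (1 − λ^k)/(k(1 − λ)) for weighted greedy is tight: for N > k, with candidates T = {z_1,…,z_N, e_1,…,e_N} where each z_i = (1/N,…,1/N) ∈ ℝ^N and e_i is the i-th standard basis vector, there is a valid run of the weighted greedy algorithm selecting only z's, yielding f(Z_k) = (1 − λ^k)/(1 − λ), while the optimal size-k set (consisting of k distinct e_j's) has value f(Z_k^*) = k, so f(Z_k)/f(Z_k^*) = (1/k)·(1 − λ^k)/(1 − λ). -/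
/-- Sort the values of a multiset of reals in nonincreasing order. -/
noncomputable def descSort (s : Multiset ℝ) : List ℝ :=
  (s.sort (· ≤ ·)).reverse

/-- `∑_j λ^j * l_j` for a list `l` (0-based exponents). -/
noncomputable def smoothSum (lam : ℝ) (l : List ℝ) : ℝ :=
  ∑ j ∈ Finset.range l.length, lam ^ j * l.getD j 0

/-- The smoothed weighted coverage function:
`f(Z) = ∑_{n<N} ∑_j λ^{j} v^{(n)}(z_{g^{(n)}(j)})` where for each aspect `n` the
values `v^{(n)}(z)`, `z ∈ Z`, are sorted nonincreasingly. -/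
noncomputable def smoothCov {Ω : Type*} (lam : ℝ) (N : ℕ) (v : Ω → ℕ → ℝ)
    (Z : Finset Ω) : ℝ :=
  ∑ n ∈ Finset.range N, smoothSum lam (descSort (Z.val.map (fun z => v z n)))

open scoped Classical in
/-- The greedy weighted dot product `w_Z^T v(z)`, where `w_Z^{(n)} = λ^{c(n)}`
and `c(n)` is the number of elements of `Z` with positive `n`-th weight. -/
noncomputable def wdot {Ω : Type*} (lam : ℝ) (N : ℕ) (v : Ω → ℕ → ℝ)
    (Z : Finset Ω) (z : Ω) : ℝ :=
  ∑ n ∈ Finset.range N, lam ^ (Z.filter (fun y => 0 < v y n)).card * v z n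

/-- Candidates of the tightness construction: `N` copies of the uniform vector
`(1/N, …, 1/N)` (left summand) and the `N` standard basis vectors (right summand). -/
noncomputable def vtight (N : ℕ) : (Fin N ⊕ Fin N) → ℕ → ℝ
  | Sum.inl _, _ => 1 / N
  | Sum.inr i, n => if n = (i : ℕ) then 1 else 0

/-- The first `m` uniform candidates `z_1, …, z_m`. -/
def ZlN (N m : ℕ) : Finset (Fin N ⊕ Fin N) :=
  (Finset.univ.filter fun i : Fin N => (i : ℕ) < m).image Sum.inl

/-- The first `m` basis candidates `e_1, …, e_m`. -/
def ZrN (N m : ℕ) : Finset (Fin N ⊕ Fin N) :=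
  (Finset.univ.filter fun i : Fin N => (i : ℕ) < m).image Sum.inr

lemma descSort_coe (s : Multiset ℝ) : (descSort s : Multiset ℝ) = s := by
  simp [descSort, Multiset.coe_reverse, Multiset.sort_eq]

lemma descSort_eq_of {s : Multiset ℝ} {l : List ℝ} (hp : (l : Multiset ℝ) = s)
    (hs : l.Pairwise (fun a b : ℝ => b ≤ a)) : descSort s = l := by
  apply fun hp h1 h2 => List.Perm.eq_of_pairwise' (r := fun a b : ℝ => b ≤ a) h1 h2 hp
  · exact Quotient.exact ((descSort_coe s).trans hp.symm)
  · unfold descSort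
    rw [List.pairwise_reverse]
    exact (s.pairwise_sort (· ≤ ·))
  · exact hs

lemma sum_getD (l : List ℝ) : ∑ j ∈ Finset.range l.length, l.getD j 0 = l.sum := by
  induction l with
  | nil => simp
  | cons a t ih =>
    rw [List.length_cons, Finset.sum_range_succ']
    simp only [List.getD, List.getD_eq_getElem?_getD] at ih ⊢
    simp [ih, add_comm]

lemma smoothSum_nonneg {lam : ℝ} (h0 : 0 ≤ lam) {l : List ℝ} (hl : ∀ x ∈ l, 0 ≤ x) :
    0 ≤ smoothSum lam l := by
  apply Finset.sum_nonneg
  intro j hj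
  rw [Finset.mem_range] at hj
  rw [List.getD_eq_getElem _ _ hj]
  exact mul_nonneg (pow_nonneg h0 _) (hl _ (l.getElem_mem hj))

lemma smoothSum_le_sum {lam : ℝ} (h0 : 0 ≤ lam) (h1 : lam ≤ 1) {l : List ℝ}
    (hl : ∀ x ∈ l, 0 ≤ x) : smoothSum lam l ≤ l.sum := by
  rw [← sum_getD]
  apply Finset.sum_le_sum
  intro j hj
  rw [Finset.mem_range] at hj
  rw [List.getD_eq_getElem _ _ hj]
  have h := hl _ (l.getElem_mem hj)
  nlinarith [pow_le_one₀ h0 h1 (n := j), pow_nonneg h0 j]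

lemma smoothSum_descSort_le {lam : ℝ} (h0 : 0 ≤ lam) (h1 : lam ≤ 1) {s : Multiset ℝ}
    (hs : ∀ x ∈ s, 0 ≤ x) : smoothSum lam (descSort s) ≤ s.sum := by
  have hmem : ∀ x ∈ descSort s, 0 ≤ x := by
    intro x hx
    exact hs x (by rw [← descSort_coe s]; exact_mod_cast hx)
  have := smoothSum_le_sum h0 h1 hmem
  rwa [← Multiset.sum_coe, descSort_coe] at this

lemma smoothSum_replicate (lam a : ℝ) (m : ℕ) :
    smoothSum lam (List.replicate m a) = (∑ j ∈ Finset.range m, lam ^ j) * a := by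
  rw [smoothSum, List.length_replicate, Finset.sum_mul]
  apply Finset.sum_congr rfl
  intro j hj
  rw [Finset.mem_range] at hj
  rw [List.getD_eq_getElem _ _ (by simpa using hj), List.getElem_replicate]

lemma smoothSum_one_cons_zeros (lam : ℝ) (m : ℕ) :
    smoothSum lam (1 :: List.replicate m (0:ℝ)) = 1 := by
  rw [smoothSum]
  rw [Finset.sum_eq_single 0]
  · simp [List.getD]
  · intro j hj hj0
    obtain ⟨j, rfl⟩ := Nat.exists_eq_succ_of_ne_zero hj0
    rw [Finset.mem_range] at hj
    rw [List.getD_cons_succ, List.getD_eq_getElem _ _ (by simpa using hj), List.getElem_replicate,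
      mul_zero]
  · simp

lemma descSort_replicate (m : ℕ) (a : ℝ) :
    descSort (Multiset.replicate m a) = List.replicate m a := by
  apply descSort_eq_of
  · exact Multiset.coe_replicate m a
  · exact List.pairwise_replicate.2 (Or.inr (le_refl a))

lemma descSort_one_cons (m : ℕ) :
    descSort ((1:ℝ) ::ₘ Multiset.replicate m 0) = 1 :: List.replicate m 0 := by
  apply descSort_eq_of
  · rw [← Multiset.cons_coe, Multiset.coe_replicate]
  · rw [List.pairwise_cons]
    constructor
    · intro x hx
      rw [List.eq_of_mem_replicate hx]; norm_num
    · exact List.pairwise_replicate.2 (Or.inr (le_refl 0))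

lemma filter_lt_card (N m : ℕ) (h : m ≤ N) :
    (Finset.univ.filter fun i : Fin N => (i : ℕ) < m).card = m := by
  have : (Finset.univ.filter fun i : Fin N => (i : ℕ) < m)
      = Finset.map (Fin.castLEEmb h) Finset.univ := by
    ext i
    simp only [Finset.mem_filter, Finset.mem_map, Finset.mem_univ, true_and, Fin.castLEEmb,
      Function.Embedding.coeFn_mk]
    constructor
    · intro hi; exact ⟨⟨i, hi⟩, by ext; rfl⟩
    · rintro ⟨j, -, rfl⟩; exact j.2
  rw [this]; simp

lemma ZlN_val_map (N m : ℕ) (h : m ≤ N) (n : ℕ) :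
    (ZlN N m).val.map (fun z => vtight N z n) = Multiset.replicate m ((1:ℝ) / N) := by
  rw [ZlN, Finset.image_val,
    Multiset.Nodup.dedup ((Finset.filter _ _).nodup.map Sum.inl_injective), Multiset.map_map]
  rw [Multiset.eq_replicate]
  constructor
  · rw [Multiset.card_map]
    have hc := filter_lt_card N m h
    rwa [Finset.card] at hc
  · intro b hb
    rw [Multiset.mem_map] at hb
    obtain ⟨i, -, rfl⟩ := hb
    rfl

lemma ZrN_val_map_lt (N m : ℕ) (h : m ≤ N) (n : ℕ) (hn : n < m) :
    (ZrN N m).val.map (fun z => vtight N z n) = (1:ℝ) ::ₘ Multiset.replicate (m-1) 0 := by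
  rw [ZrN, Finset.image_val,
    Multiset.Nodup.dedup ((Finset.filter _ _).nodup.map Sum.inr_injective), Multiset.map_map]
  set F := Finset.univ.filter fun i : Fin N => (i : ℕ) < m with hF
  have hNpos : n < N := lt_of_lt_of_le hn h
  set a : Fin N := ⟨n, hNpos⟩ with ha
  have haF : a ∈ F.val := by
    rw [hF]; simp [Finset.mem_filter, ha, hn]
  have hcons : F.val = a ::ₘ F.val.erase a := (Multiset.cons_erase haF).symm
  rw [hcons, Multiset.map_cons]
  have h1 : ((fun z => vtight N z n) ∘ Sum.inr) a = 1 := by simp [vtight, ha]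
  rw [h1]
  congr 1
  rw [Multiset.eq_replicate]
  constructor
  · rw [Multiset.card_map, Multiset.card_erase_of_mem haF]
    have hc := filter_lt_card N m h
    rw [Finset.card] at hc
    rw [← hF] at hc
    rw [hc]
    rfl
  · intro b hb
    rw [Multiset.mem_map] at hb
    obtain ⟨i, hi, rfl⟩ := hb
    have hia : i ≠ a := ((F.nodup.mem_erase_iff).1 hi).1
    have : (n : ℕ) ≠ (i : ℕ) := by
      intro hcontra
      exact hia (Fin.ext hcontra.symm)
    simp [vtight, this]

lemma ZrN_val_map_ge (N m : ℕ) (h : m ≤ N) (n : ℕ) (hn : m ≤ n) :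
    (ZrN N m).val.map (fun z => vtight N z n) = Multiset.replicate m (0:ℝ) := by
  rw [ZrN, Finset.image_val,
    Multiset.Nodup.dedup ((Finset.filter _ _).nodup.map Sum.inr_injective), Multiset.map_map]
  rw [Multiset.eq_replicate]
  constructor
  · rw [Multiset.card_map]
    have hc := filter_lt_card N m h
    rwa [Finset.card] at hc
  · intro b hb
    rw [Multiset.mem_map] at hb
    obtain ⟨i, hi, rfl⟩ := hb
    have hi' : (i : ℕ) < m := by
      simp only [Finset.mem_val, Finset.mem_filter] at hi
      exact hi.2
    have : (n : ℕ) ≠ (i : ℕ) := by omega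
    simp [vtight, this]

lemma vtight_nonneg (N : ℕ) (z : Fin N ⊕ Fin N) (n : ℕ) : 0 ≤ vtight N z n := by
  cases z with
  | inl i => simp [vtight]
  | inr i => simp only [vtight]; split <;> norm_num

lemma sum_vtight (N : ℕ) (hN : 0 < N) (z : Fin N ⊕ Fin N) :
    ∑ n ∈ Finset.range N, vtight N z n = 1 := by
  cases z with
  | inl i =>
    simp only [vtight, Finset.sum_const, Finset.card_range, nsmul_eq_mul]
    field_simp
  | inr i =>
    simp only [vtight]
    rw [Finset.sum_ite_eq' (Finset.range N) (i : ℕ) (fun _ => (1:ℝ))]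
    simp [i.2]

lemma smoothCov_ZlN (N k : ℕ) (hN : 0 < N) (hk : k ≤ N) (lam : ℝ) :
    smoothCov lam N (vtight N) (ZlN N k) = ∑ j ∈ Finset.range k, lam ^ j := by
  unfold smoothCov
  have h : ∀ n ∈ Finset.range N,
      smoothSum lam (descSort ((ZlN N k).val.map (fun z => vtight N z n)))
        = (∑ j ∈ Finset.range k, lam ^ j) * ((1:ℝ)/N) := by
    intro n _
    rw [ZlN_val_map N k hk n, descSort_replicate, smoothSum_replicate]
  rw [Finset.sum_congr rfl h, Finset.sum_const, Finset.card_range, nsmul_eq_mul]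
  have : (N:ℝ) ≠ 0 := Nat.cast_ne_zero.2 hN.ne'
  field_simp

lemma smoothCov_ZrN (N k : ℕ) (hk : k ≤ N) (lam : ℝ) :
    smoothCov lam N (vtight N) (ZrN N k) = k := by
  unfold smoothCov
  have h : ∀ n ∈ Finset.range N,
      smoothSum lam (descSort ((ZrN N k).val.map (fun z => vtight N z n)))
        = if n < k then (1:ℝ) else 0 := by
    intro n _
    by_cases hn : n < k
    · rw [ZrN_val_map_lt N k hk n hn, descSort_one_cons, smoothSum_one_cons_zeros, if_pos hn]
    · rw [ZrN_val_map_ge N k hk n (le_of_not_gt hn), descSort_replicate, smoothSum_replicate,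
        mul_zero, if_neg hn]
  rw [Finset.sum_congr rfl h, Finset.sum_ite, Finset.sum_const, Finset.sum_const, smul_zero,
    add_zero]
  have : (Finset.range N).filter (fun n => n < k) = Finset.range k := by
    ext n; simp; omega
  rw [this, Finset.card_range, nsmul_eq_mul, mul_one]

lemma smoothCov_le (N : ℕ) (hN : 0 < N) (lam : ℝ) (h0 : 0 ≤ lam) (h1 : lam ≤ 1)
    (Z : Finset (Fin N ⊕ Fin N)) :
    smoothCov lam N (vtight N) Z ≤ Z.card := by
  unfold smoothCov
  calc ∑ n ∈ Finset.range N, smoothSum lam (descSort (Z.val.map (fun z => vtight N z n)))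
      ≤ ∑ n ∈ Finset.range N, (Z.val.map (fun z => vtight N z n)).sum := by
        apply Finset.sum_le_sum
        intro n _
        apply smoothSum_descSort_le h0 h1
        intro x hx
        rw [Multiset.mem_map] at hx
        obtain ⟨z, -, rfl⟩ := hx
        exact vtight_nonneg N z n
    _ = ∑ n ∈ Finset.range N, ∑ z ∈ Z, vtight N z n := rfl
    _ = ∑ z ∈ Z, ∑ n ∈ Finset.range N, vtight N z n := Finset.sum_comm
    _ = ∑ z ∈ Z, (1:ℝ) := by
        apply Finset.sum_congr rfl
        intro z _
        exact sum_vtight N hN z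
    _ = Z.card := by simp

lemma wdot_ZlN (N i : ℕ) (hi : i ≤ N) (hN : 0 < N) (lam : ℝ) (z : Fin N ⊕ Fin N) :
    wdot lam N (vtight N) (ZlN N i) z = lam ^ i := by
  unfold wdot
  have hfilter : ∀ n : ℕ, ((ZlN N i).filter (fun y => 0 < vtight N y n)) = ZlN N i := by
    intro n
    apply Finset.filter_true_of_mem
    intro y hy
    rw [ZlN, Finset.mem_image] at hy
    obtain ⟨j, -, rfl⟩ := hy
    simp only [vtight]
    positivity
  have hcard : (ZlN N i).card = i := by
    rw [ZlN, Finset.card_image_of_injective _ Sum.inl_injective, filter_lt_card N i hi]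
  have : ∀ n ∈ Finset.range N,
      lam ^ ((ZlN N i).filter (fun y => 0 < vtight N y n)).card * vtight N z n
        = lam ^ i * vtight N z n := by
    intro n _
    rw [hfilter n, hcard]
  rw [Finset.sum_congr rfl this, ← Finset.mul_sum, sum_vtight N hN z, mul_one]

/-- tightness of the `(1-λ^k)/(k(1-λ))` bound. Selecting only
uniform vectors is a valid greedy run with value `(1-λ^k)/(1-λ)`, while the
optimal size-`k` set of basis vectors has value `k`. -/
theorem weighted_greedy_bound_tight (N k : ℕ) (hk : 0 < k) (hNk : k < N)
    (lam : ℝ) (hlam0 : 0 ≤ lam) (hlam1 : lam < 1) :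
    (∀ i : ℕ, ∀ hi : i < k, ∀ z : Fin N ⊕ Fin N,
      wdot lam N (vtight N) (ZlN N i) z ≤
        wdot lam N (vtight N) (ZlN N i) (Sum.inl ⟨i, hi.trans hNk⟩)) ∧
    smoothCov lam N (vtight N) (ZlN N k) = (1 - lam ^ k) / (1 - lam) ∧
    smoothCov lam N (vtight N) (ZrN N k) = k ∧
    (∀ Z : Finset (Fin N ⊕ Fin N), Z.card = k →
      smoothCov lam N (vtight N) Z ≤ k) ∧
    smoothCov lam N (vtight N) (ZlN N k) / smoothCov lam N (vtight N) (ZrN N k) =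
      (1 / (k : ℝ)) * ((1 - lam ^ k) / (1 - lam)) := by
  have hN : 0 < N := hk.trans hNk
  have hkN : k ≤ N := hNk.le
  have hgeom : ∑ j ∈ Finset.range k, lam ^ j = (1 - lam ^ k) / (1 - lam) := by
    rw [geom_sum_eq hlam1.ne, ← neg_div_neg_eq, neg_sub, neg_sub]
  refine ⟨?_, ?_, ?_, ?_, ?_⟩
  · intro i hi z
    rw [wdot_ZlN N i (le_of_lt (hi.trans hNk)) hN, wdot_ZlN N i (le_of_lt (hi.trans hNk)) hN]
  · rw [smoothCov_ZlN N k hN hkN, hgeom]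
  · exact smoothCov_ZrN N k hkN lam
  · intro Z hZ
    have h := smoothCov_le N hN lam hlam0 hlam1.le Z
    rwa [hZ] at h
  · rw [smoothCov_ZlN N k hN hkN, smoothCov_ZrN N k hkN, hgeom]
    ring
end

section
/- The per-aspect smoothed coverage f_n satisfies the exact marginal-gain identity: for a finite set Z with sorted values v_0 ≥ v_1 ≥ … ≥ v_{K−1} in coordinate n and two new values v ≥ v' inserted at positions i and j respectively (v_i ≥ v ≥ v_{i+1}, v_j ≥ v' ≥ v_{j+1}), one has f_n(Z ∪ {v}) + f_n(Z ∪ {v'}) − f_n(Z ∪ {v, v'}) − f_n(Z) = (1 − λ)(λ^j v' − (1 − λ) R), where R = Σ_{l > j} λ^l v_l; moreover this quantity is nonnegative for λ ∈ [0,1] and nonnegative weights. -/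
/-- Per-aspect smoothed coverage of a multiset of values. -/
noncomputable def fAspect (lam : ℝ) (s : Multiset ℝ) : ℝ :=
  smoothSum lam (descSort s)

lemma smoothSum_cons (lam a : ℝ) (l : List ℝ) :
    smoothSum lam (a :: l) = a + lam * smoothSum lam l := by
  unfold smoothSum
  rw [List.length_cons, Finset.sum_range_succ']
  simp only [List.getD_cons_succ, List.getD_cons_zero, pow_zero, one_mul]
  rw [Finset.mul_sum, add_comm]
  congr 1
  refine Finset.sum_congr rfl fun x _ => ?_
  rw [pow_succ]
  ring

lemma smoothSum_append (lam : ℝ) (A B : List ℝ) :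
    smoothSum lam (A ++ B) = smoothSum lam A + lam ^ A.length * smoothSum lam B := by
  induction A with
  | nil => simp [smoothSum]
  | cons a A ih =>
      rw [List.cons_append, smoothSum_cons, smoothSum_cons, ih]
      simp [pow_succ]
      ring

lemma descSort_coe_s13 (l : List ℝ) (h : l.Pairwise (· ≥ ·)) : descSort ↑l = l := by
  unfold descSort
  have hperm : (Multiset.sort (↑l : Multiset ℝ) (· ≤ ·)).reverse.Perm l := by
    refine List.Perm.trans (List.reverse_perm _) ?_
    rw [← Multiset.coe_eq_coe, Multiset.sort_eq]
  have hsorted : (Multiset.sort (↑l : Multiset ℝ) (· ≤ ·)).reverse.Pairwise (· ≥ ·) := by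
    rw [List.pairwise_reverse]
    exact Multiset.pairwise_sort (α := ℝ) ↑l (· ≤ ·)
  exact List.Perm.eq_of_pairwise' hsorted h hperm

lemma mem_take_ofFn {K : ℕ} (vs : Fin K → ℝ) {n : ℕ} {a : ℝ}
    (ha : a ∈ (List.ofFn vs).take n) : ∃ k : Fin K, (k : ℕ) < n ∧ a = vs k := by
  obtain ⟨m, hm, rfl⟩ := List.mem_iff_getElem.mp ha
  have h1 : m < n ∧ m < K := by
    simpa [List.length_take] using hm
  exact ⟨⟨m, h1.2⟩, h1.1, by simp [List.getElem_take, List.getElem_ofFn]⟩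

lemma mem_drop_ofFn {K : ℕ} (vs : Fin K → ℝ) {n : ℕ} {a : ℝ}
    (ha : a ∈ (List.ofFn vs).drop n) : ∃ k : Fin K, n ≤ (k : ℕ) ∧ a = vs k := by
  obtain ⟨m, hm, rfl⟩ := List.mem_iff_getElem.mp ha
  have h1 : n + m < K := by
    have h2 := hm
    rw [List.length_drop, List.length_ofFn] at h2
    omega
  exact ⟨⟨n + m, h1⟩, by simp, by simp [List.getElem_drop, List.getElem_ofFn]⟩

/-- exact marginal-gain identity for the per-aspect smoothed
coverage. With sorted values `vs 0 ≥ … ≥ vs (K-1)`, new values `v ≥ v'`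
inserted at positions `i` and `j` (`vs i ≥ v ≥ vs (i+1)`,
`vs j ≥ v' ≥ vs (j+1)`), and `R = ∑_{l > j} λ^l vs l`, one has
`f(Z∪{v}) + f(Z∪{v'}) − f(Z∪{v,v'}) − f(Z) = (1−λ)(λ^{j+1} v' − (1−λ)R) ≥ 0`.
(The coefficient `λ^{j+1}` is the coefficient that the inserted value `v'`
receives, `vs j` keeping coefficient `λ^j`.) -/
theorem fAspect_marginal_identity (lam : ℝ) (hlam0 : 0 ≤ lam) (hlam1 : lam ≤ 1)
    (K : ℕ) (vs : Fin K → ℝ) (hnn : ∀ l, 0 ≤ vs l) (hanti : Antitone vs)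
    (v v' : ℝ) (hv' : 0 ≤ v') (hvv : v' ≤ v)
    (i j : Fin K) (hij : i ≤ j)
    (hvi : v ≤ vs i) (hvi' : ∀ h : (i : ℕ) + 1 < K, vs ⟨(i : ℕ) + 1, h⟩ ≤ v)
    (hvj : v' ≤ vs j) (hvj' : ∀ h : (j : ℕ) + 1 < K, vs ⟨(j : ℕ) + 1, h⟩ ≤ v') :
    (fAspect lam (v ::ₘ ↑(List.ofFn vs)) + fAspect lam (v' ::ₘ ↑(List.ofFn vs))
        - fAspect lam (v ::ₘ v' ::ₘ ↑(List.ofFn vs)) - fAspect lam ↑(List.ofFn vs)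
      = (1 - lam) * (lam ^ ((j : ℕ) + 1) * v'
          - (1 - lam) * ∑ l ∈ Finset.univ.filter (fun l : Fin K => j < l),
              lam ^ (l : ℕ) * vs l)) ∧
    0 ≤ fAspect lam (v ::ₘ ↑(List.ofFn vs)) + fAspect lam (v' ::ₘ ↑(List.ofFn vs))
        - fAspect lam (v ::ₘ v' ::ₘ ↑(List.ofFn vs)) - fAspect lam ↑(List.ofFn vs) := by
  have hiK : (i : ℕ) < K := i.isLt
  have hjK : (j : ℕ) < K := j.isLt
  have hijn : (i : ℕ) ≤ (j : ℕ) := hij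
  set base : List ℝ := List.ofFn vs with hbase
  have hlen : base.length = K := by simp [hbase]
  set P : List ℝ := base.take ((i : ℕ) + 1) with hP
  set Q : List ℝ := (base.drop ((i : ℕ) + 1)).take ((j : ℕ) - (i : ℕ)) with hQ
  set R : List ℝ := base.drop ((j : ℕ) + 1) with hR
  have hPlen : P.length = (i : ℕ) + 1 := by
    simp only [hP, List.length_take, hlen]; omega
  have hPQ : P ++ Q = base.take ((j : ℕ) + 1) := by
    have h1 : (j : ℕ) + 1 = ((i : ℕ) + 1) + ((j : ℕ) - (i : ℕ)) := by omega
    rw [h1, List.take_add]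
  have hQlen : Q.length = (j : ℕ) - (i : ℕ) := by
    simp only [hQ, List.length_take, List.length_drop, hlen]; omega
  have hPQlen : (P ++ Q).length = (j : ℕ) + 1 := by
    rw [List.length_append, hPlen, hQlen]; omega
  have hQR : Q ++ R = base.drop ((i : ℕ) + 1) := by
    have h1 : ((i : ℕ) + 1) + ((j : ℕ) - (i : ℕ)) = (j : ℕ) + 1 := by omega
    conv_rhs => rw [← List.take_append_drop ((j : ℕ) - (i : ℕ)) (base.drop ((i : ℕ) + 1))]
    congr 1
    rw [List.drop_drop, h1]
  have hsplit : base = P ++ (Q ++ R) := by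
    rw [hQR, List.take_append_drop]
  -- sortedness of base
  have hbsorted : base.Pairwise (· ≥ ·) := by
    rw [List.pairwise_iff_getElem]
    intro a b ha hb hab
    rw [hlen] at ha hb
    simp only [hbase, List.getElem_ofFn]
    exact hanti (show (⟨a, ha⟩ : Fin K) ≤ ⟨b, hb⟩ by simp [Fin.mk_le_mk]; omega)
  -- membership bounds
  have hPmem : ∀ a ∈ P, v ≤ a := by
    intro a ha
    rw [hP, hbase] at ha
    obtain ⟨k, hk, rfl⟩ := mem_take_ofFn vs ha
    exact le_trans hvi (hanti (show k ≤ i from by rw [Fin.le_def]; omega))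
  have hQRmem : ∀ a ∈ base.drop ((i : ℕ) + 1), a ≤ v := by
    intro a ha
    rw [hbase] at ha
    obtain ⟨k, hk, rfl⟩ := mem_drop_ofFn vs ha
    have hiK' : (i : ℕ) + 1 < K := by omega
    exact le_trans (hanti (show (⟨(i : ℕ) + 1, hiK'⟩ : Fin K) ≤ k from by
      rw [Fin.le_def]; exact hk)) (hvi' hiK')
  have hPQmem : ∀ a ∈ P ++ Q, v' ≤ a := by
    intro a ha
    rw [hPQ, hbase] at ha
    obtain ⟨k, hk, rfl⟩ := mem_take_ofFn vs ha
    exact le_trans hvj (hanti (show k ≤ j from by rw [Fin.le_def]; omega))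
  have hRmem : ∀ a ∈ R, a ≤ v' := by
    intro a ha
    rw [hR, hbase] at ha
    obtain ⟨k, hk, rfl⟩ := mem_drop_ofFn vs ha
    have hjK' : (j : ℕ) + 1 < K := by omega
    exact le_trans (hanti (show (⟨(j : ℕ) + 1, hjK'⟩ : Fin K) ≤ k from by
      rw [Fin.le_def]; exact hk)) (hvj' hjK')
  have hQmem : ∀ a ∈ Q, a ≤ v ∧ v' ≤ a := fun a ha =>
    ⟨hQRmem a (hQR ▸ List.mem_append_left _ ha),
     hPQmem a (List.mem_append_right _ ha)⟩
  -- sortedness of pieces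
  have hsP : P.Pairwise (· ≥ ·) := hbsorted.sublist (List.take_sublist _ _)
  have hsPQ : (P ++ Q).Pairwise (· ≥ ·) := by
    rw [hPQ]; exact hbsorted.sublist (List.take_sublist _ _)
  have hsQ : Q.Pairwise (· ≥ ·) := hsPQ.sublist (List.sublist_append_right _ _)
  have hsR : R.Pairwise (· ≥ ·) := hbsorted.sublist (List.drop_sublist _ _)
  have hsQR : (Q ++ R).Pairwise (· ≥ ·) := by
    rw [hQR]; exact hbsorted.sublist (List.drop_sublist _ _)
  -- the four explicit sorted lists
  have hL1 : descSort (v ::ₘ ↑base) = P ++ (v :: (Q ++ R)) := by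
    have hperm : ((P ++ (v :: (Q ++ R)) : List ℝ) : Multiset ℝ) = v ::ₘ ↑base := by
      rw [hsplit]
      exact Multiset.coe_eq_coe.mpr List.perm_middle
    rw [← hperm, descSort_coe_s13]
    rw [List.pairwise_append]
    refine ⟨hsP, ?_, ?_⟩
    · rw [List.pairwise_cons]
      exact ⟨fun b hb => hQRmem b (hQR ▸ hb), hsQR⟩
    · intro a ha b hb
      rcases List.mem_cons.mp hb with rfl | hb
      · exact hPmem a ha
      · exact le_trans (hQRmem b (hQR ▸ hb)) (hPmem a ha)
  have hL2 : descSort (v' ::ₘ ↑base) = (P ++ Q) ++ (v' :: R) := by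
    have hperm : (((P ++ Q) ++ (v' :: R) : List ℝ) : Multiset ℝ) = v' ::ₘ ↑base := by
      rw [hsplit, ← List.append_assoc]
      exact Multiset.coe_eq_coe.mpr List.perm_middle
    rw [← hperm, descSort_coe_s13]
    rw [List.pairwise_append]
    refine ⟨hsPQ, ?_, ?_⟩
    · rw [List.pairwise_cons]
      exact ⟨hRmem, hsR⟩
    · intro a ha b hb
      rcases List.mem_cons.mp hb with rfl | hb
      · exact hPQmem a ha
      · exact le_trans (hRmem b hb) (hPQmem a ha)
  have hL12 : descSort (v ::ₘ v' ::ₘ ↑base) = P ++ (v :: (Q ++ (v' :: R))) := by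
    have hperm : ((P ++ (v :: (Q ++ (v' :: R))) : List ℝ) : Multiset ℝ)
        = v ::ₘ v' ::ₘ ↑base := by
      refine Multiset.coe_eq_coe.mpr (List.perm_middle.trans (List.Perm.cons v ?_))
      rw [hsplit, ← List.append_assoc]
      exact List.perm_middle.trans (by rw [List.append_assoc])
    rw [← hperm, descSort_coe_s13]
    rw [List.pairwise_append]
    refine ⟨hsP, ?_, ?_⟩
    · rw [List.pairwise_cons]
      constructor
      · intro b hb
        rcases List.mem_append.mp hb with hb | hb
        · exact (hQmem b hb).1
        · rcases List.mem_cons.mp hb with rfl | hb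
          · exact hvv
          · exact le_trans (hRmem b hb) hvv
      · rw [List.pairwise_append]
        refine ⟨hsQ, ?_, ?_⟩
        · rw [List.pairwise_cons]
          exact ⟨hRmem, hsR⟩
        · intro a ha b hb
          rcases List.mem_cons.mp hb with rfl | hb
          · exact (hQmem a ha).2
          · exact le_trans (hRmem b hb) (hQmem a ha).2
    · intro a ha b hb
      rcases List.mem_cons.mp hb with rfl | hb
      · exact hPmem a ha
      rcases List.mem_append.mp hb with hb | hb
      · exact le_trans (hQmem b hb).1 (hPmem a ha)
      rcases List.mem_cons.mp hb with rfl | hb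
      · exact le_trans hvv (hPmem a ha)
      · exact le_trans (le_trans (hRmem b hb) hvv) (hPmem a ha)
  have hL0 : descSort (↑base) = P ++ (Q ++ R) := by
    rw [← hsplit]
    exact descSort_coe_s13 base hbsorted
  -- abbreviations
  set p := smoothSum lam P with hp
  set q := smoothSum lam Q with hq
  set r := smoothSum lam R with hrr
  -- smoothSum values
  have hf0 : fAspect lam ↑base
      = p + lam ^ ((i : ℕ) + 1) * (q + lam ^ ((j : ℕ) - (i : ℕ)) * r) := by
    rw [fAspect, hL0, smoothSum_append, smoothSum_append, hPlen, hQlen]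
  have hf1 : fAspect lam (v ::ₘ ↑base)
      = p + lam ^ ((i : ℕ) + 1) * (v + lam * (q + lam ^ ((j : ℕ) - (i : ℕ)) * r)) := by
    rw [fAspect, hL1, smoothSum_append, smoothSum_cons, smoothSum_append, hPlen, hQlen]
  have hf2 : fAspect lam (v' ::ₘ ↑base)
      = (p + lam ^ ((i : ℕ) + 1) * q) + lam ^ ((j : ℕ) + 1) * (v' + lam * r) := by
    rw [fAspect, hL2, smoothSum_append, smoothSum_cons, smoothSum_append, hPlen, hPQlen]
  have hf12 : fAspect lam (v ::ₘ v' ::ₘ ↑base)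
      = p + lam ^ ((i : ℕ) + 1)
          * (v + lam * (q + lam ^ ((j : ℕ) - (i : ℕ)) * (v' + lam * r))) := by
    rw [fAspect, hL12, smoothSum_append, smoothSum_cons, smoothSum_append, smoothSum_cons,
      hPlen, hQlen]
  -- getD facts for R and base
  have hRlen : R.length = K - ((j : ℕ) + 1) := by rw [hR, List.length_drop, hlen]
  have hgetBase : ∀ (m : ℕ) (hm : m < K), base.getD m 0 = vs ⟨m, hm⟩ := by
    intro m hm
    rw [hbase, List.getD_eq_getElem _ _ (by simpa using hm)]
    simp [List.getElem_ofFn]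
  have hgetRD : ∀ m : ℕ, m < K - ((j : ℕ) + 1) → R.getD m 0 = base.getD ((j : ℕ) + 1 + m) 0 := by
    intro m hm
    rw [hR]
    rw [List.getD_eq_getElem _ _ (by rw [List.length_drop, hlen]; omega),
      List.getD_eq_getElem _ _ (by rw [hlen]; omega)]
    simp [List.getElem_drop]
  have hgetR : ∀ (m : ℕ) (hm : (j : ℕ) + 1 + m < K),
      R.getD m 0 = vs ⟨(j : ℕ) + 1 + m, hm⟩ := fun m hm => by
    rw [hgetRD m (by omega), hgetBase _ hm]
  -- the filtered sum equals lam^(j+1) * r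
  have hT : (∑ l ∈ Finset.univ.filter (fun l : Fin K => j < l), lam ^ (l : ℕ) * vs l)
      = lam ^ ((j : ℕ) + 1) * r := by
    have h1 : (∑ l ∈ Finset.univ.filter (fun l : Fin K => j < l), lam ^ (l : ℕ) * vs l)
        = ∑ l ∈ Finset.range K,
            (if (j : ℕ) < l then lam ^ l * base.getD l 0 else 0) := by
      rw [Finset.sum_filter]
      rw [← Fin.sum_univ_eq_sum_range
        (fun l => if (j : ℕ) < l then lam ^ l * base.getD l 0 else 0) K]
      refine Finset.sum_congr rfl fun l _ => ?_
      rw [hgetBase l l.isLt]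
      simp only [Fin.eta, Fin.lt_def]
    rw [h1, hrr, smoothSum, hRlen, Finset.mul_sum]
    generalize hjn : (j : ℕ) = jn
    nth_rewrite 1 [show K = (jn + 1) + (K - (jn + 1)) from by omega]
    rw [Finset.sum_range_add]
    rw [Finset.sum_eq_zero (fun n hn => by
      rw [if_neg]; rw [Finset.mem_range] at hn; omega), zero_add]
    refine Finset.sum_congr rfl fun m hm => ?_
    rw [Finset.mem_range] at hm
    rw [if_pos (by omega), hgetRD m (by omega), hjn, pow_add]
    ring
  have hpow : lam ^ ((i : ℕ) + 1) * lam ^ ((j : ℕ) - (i : ℕ)) = lam ^ ((j : ℕ) + 1) := by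
    rw [← pow_add]
    congr 1
    omega
  have hmain : fAspect lam (v ::ₘ ↑base) + fAspect lam (v' ::ₘ ↑base)
        - fAspect lam (v ::ₘ v' ::ₘ ↑base) - fAspect lam ↑base
      = (1 - lam) * (lam ^ ((j : ℕ) + 1) * v'
          - (1 - lam) * ∑ l ∈ Finset.univ.filter (fun l : Fin K => j < l),
              lam ^ (l : ℕ) * vs l) := by
    rw [hf0, hf1, hf2, hf12, hT]
    linear_combination ((1 - lam) * (v' - (1 - lam) * r) - (v' + lam * r)) * hpow
  refine ⟨hmain, ?_⟩
  rw [hmain, hT]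
  -- nonnegativity
  have hgeo : (1 - lam) * (∑ m ∈ Finset.range R.length, lam ^ m)
      = 1 - lam ^ R.length := by
    linear_combination -(geom_sum_mul lam R.length)
  have hr_ub : r ≤ (∑ m ∈ Finset.range R.length, lam ^ m) * v' := by
    rw [hrr, smoothSum, Finset.sum_mul]
    refine Finset.sum_le_sum fun m hm => ?_
    rw [Finset.mem_range, hRlen] at hm
    have hm' : (j : ℕ) + 1 + m < K := by omega
    rw [hgetR m hm']
    refine mul_le_mul_of_nonneg_left ?_ (pow_nonneg hlam0 _)
    have hjK' : (j : ℕ) + 1 < K := by omega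
    exact le_trans (hanti (show (⟨(j : ℕ) + 1, hjK'⟩ : Fin K) ≤ ⟨(j : ℕ) + 1 + m, hm'⟩ from by
      rw [Fin.mk_le_mk]; omega)) (hvj' hjK')
  have hrub : (1 - lam) * r ≤ v' := by
    have h5 : (1 - lam) * r ≤ (1 - lam) * ((∑ m ∈ Finset.range R.length, lam ^ m) * v') :=
      mul_le_mul_of_nonneg_left hr_ub (by linarith)
    have h6 : (1 - lam) * ((∑ m ∈ Finset.range R.length, lam ^ m) * v')
        = (1 - lam ^ R.length) * v' := by
      rw [← mul_assoc, hgeo]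
    nlinarith [pow_nonneg hlam0 R.length]
  have h4 : (1 - lam) * (lam ^ ((j : ℕ) + 1) * v' - (1 - lam) * (lam ^ ((j : ℕ) + 1) * r))
      = (1 - lam) * lam ^ ((j : ℕ) + 1) * (v' - (1 - lam) * r) := by ring
  rw [h4]
  exact mul_nonneg (mul_nonneg (by linarith) (pow_nonneg hlam0 _)) (by linarith)
end
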